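/- arXiv:2005.05111 — 3 statements merged into one kernel-verified Lean document; each statement's English description precedes it below -/
import Mathlib

section
/- (Claim 1, forward direction.) If a transition kernel p(m|x,y) is private against Alice with respect to g and private against Bob with respect to h, then for every input distribution p_XY on 𝒳×𝒴, under the joint law of (X,Y,M) given by p_XY(x,y)·p(m|x,y), with F = f(X,Y), G = g(X,Y), H = h(X,Y), the conditional mutual informations satisfy I(M;G|F,X) = 0 and I(M;H|F,Y) = 0. -/
/-!
Under the joint law `π(s) κ(m | s)`, the conditional mutual information `I(M; B | C)` vanishes as
soon as `κ(· | s₁) = κ(· | s₂)` whenever `C s₁ = C s₂` and `B s₁ ≠ B s₂`: splitting the fibre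
`C = c` by the value of `B` gives `p(m,b,c) p(c) = p(m,c) p(b,c)`, and this factorization makes the
four entropy terms of `I(M; B | C)`, written as expectations of `-log` of marginal masses, cancel
at every point of positive mass. Privacy against Alice is this hypothesis for `B = g` and
`C = (f, x)`, privacy against Bob for `B = h` and `C = (f, y)`.
-/

open scoped BigOperators

/-- A probability mass function on a finite type, given as a real-valued function. -/
def IsPMF {Ω : Type*} [Fintype Ω] (p : Ω → ℝ) : Prop :=
  (∀ ω, 0 ≤ p ω) ∧ ∑ ω, p ω = 1

open Classical in
/-- Probability of an event under a pmf on a finite type. -/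
noncomputable def probOf {Ω : Type*} [Fintype Ω] (p : Ω → ℝ) (E : Ω → Prop) : ℝ :=
  ∑ ω, if E ω then p ω else 0

/-- Distribution (pushforward) of a random variable `A` under pmf `p`. -/
noncomputable def distOf {Ω β : Type*} [Fintype Ω] [DecidableEq β]
    (p : Ω → ℝ) (A : Ω → β) : β → ℝ :=
  fun b => ∑ ω, if A ω = b then p ω else 0

/-- Shannon entropy (in nats) of a distribution on a finite type. -/
noncomputable def entD {β : Type*} [Fintype β] (q : β → ℝ) : ℝ :=
  -∑ b, q b * Real.log (q b)

/-- Shannon entropy H(A) of a random variable `A` under pmf `p`. -/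
noncomputable def entRV {Ω β : Type*} [Fintype Ω] [Fintype β] [DecidableEq β]
    (p : Ω → ℝ) (A : Ω → β) : ℝ :=
  entD (distOf p A)

/-- Conditional Shannon entropy H(A | C). -/
noncomputable def condEnt {Ω β γ : Type*} [Fintype Ω] [Fintype β] [DecidableEq β]
    [Fintype γ] [DecidableEq γ] (p : Ω → ℝ) (A : Ω → β) (C : Ω → γ) : ℝ :=
  entRV p (fun ω => (A ω, C ω)) - entRV p C

/-- Mutual information I(A; B). -/
noncomputable def mutInfo {Ω β γ : Type*} [Fintype Ω] [Fintype β] [DecidableEq β]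
    [Fintype γ] [DecidableEq γ] (p : Ω → ℝ) (A : Ω → β) (B : Ω → γ) : ℝ :=
  entRV p A + entRV p B - entRV p (fun ω => (A ω, B ω))

/-- Conditional mutual information I(A; B | C). -/
noncomputable def condMutInfo {Ω β γ δ : Type*} [Fintype Ω] [Fintype β] [DecidableEq β]
    [Fintype γ] [DecidableEq γ] [Fintype δ] [DecidableEq δ]
    (p : Ω → ℝ) (A : Ω → β) (B : Ω → γ) (C : Ω → δ) : ℝ :=
  entRV p (fun ω => (A ω, C ω)) + entRV p (fun ω => (B ω, C ω))
    - entRV p (fun ω => (A ω, B ω, C ω)) - entRV p C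

/-- Privacy against Alice with respect to `g` of a transition kernel `k(m|x,y)`,
for the function `f` being computed. -/
def PrivAlice {𝒳 𝒴 𝒵 𝒢 ℳ : Type*} (f : 𝒳 → 𝒴 → 𝒵) (g : 𝒳 → 𝒴 → 𝒢)
    (k : 𝒳 → 𝒴 → ℳ → ℝ) : Prop :=
  ∀ x y₁ y₂, g x y₁ ≠ g x y₂ → f x y₁ = f x y₂ → ∀ m, k x y₁ m = k x y₂ m

/-- Privacy against Bob with respect to `h` of a transition kernel `k(m|x,y)`,
for the function `f` being computed. -/
def PrivBob {𝒳 𝒴 𝒵 ℋ ℳ : Type*} (f : 𝒳 → 𝒴 → 𝒵) (h : 𝒳 → 𝒴 → ℋ)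
    (k : 𝒳 → 𝒴 → ℳ → ℝ) : Prop :=
  ∀ x₁ x₂ y, h x₁ y ≠ h x₂ y → f x₁ y = f x₂ y → ∀ m, k x₁ y m = k x₂ y m

-- Stated multiplicatively, so that no conditional law with its junk value at `p(c) = 0` appears.
def IsCondIndep {Ω β γ δ : Type*} [Fintype Ω] [DecidableEq β] [DecidableEq γ] [DecidableEq δ]
    (p : Ω → ℝ) (A : Ω → β) (B : Ω → γ) (C : Ω → δ) : Prop :=
  ∀ a b c, distOf p (fun ω => (A ω, B ω, C ω)) (a, b, c) * distOf p C c
    = distOf p (fun ω => (A ω, C ω)) (a, c) * distOf p (fun ω => (B ω, C ω)) (b, c)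

section Entropy

variable {Ω : Type*} [Fintype Ω] {p : Ω → ℝ}

lemma self_le_distOf {β : Type*} [DecidableEq β] (hp : ∀ ω, 0 ≤ p ω) (V : Ω → β) (ω : Ω) :
    p ω ≤ distOf p V (V ω) := by
  calc p ω = if V ω = V ω then p ω else 0 := by rw [if_pos rfl]
    _ ≤ distOf p V (V ω) :=
      Finset.single_le_sum (f := fun ω' => if V ω' = V ω then p ω' else 0)
        (fun ω' _ => by split_ifs <;> simp [hp ω']) (Finset.mem_univ ω)

lemma entRV_eq_neg_sum_log {β : Type*} [Fintype β] [DecidableEq β] (p : Ω → ℝ) (V : Ω → β) :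
    entRV p V = -∑ ω, p ω * Real.log (distOf p V (V ω)) := by
  unfold entRV entD
  congr 1
  calc ∑ v, distOf p V v * Real.log (distOf p V v)
      = ∑ v, ∑ ω, if V ω = v then p ω * Real.log (distOf p V v) else 0 := by
        simp only [distOf, Finset.sum_mul, ite_mul, zero_mul]
    _ = ∑ ω, p ω * Real.log (distOf p V (V ω)) := by
        rw [Finset.sum_comm]
        simp only [Finset.sum_ite_eq, Finset.mem_univ, if_true]

theorem condMutInfo_eq_zero_of_isCondIndep {β γ δ : Type*} [Fintype β] [DecidableEq β]
    [Fintype γ] [DecidableEq γ] [Fintype δ] [DecidableEq δ] (hp : ∀ ω, 0 ≤ p ω)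
    {A : Ω → β} {B : Ω → γ} {C : Ω → δ} (hABC : IsCondIndep p A B C) : condMutInfo p A B C = 0 := by
  have pointwise : ∀ ω,
      p ω * Real.log (distOf p (fun ω => (A ω, C ω)) (A ω, C ω))
        + p ω * Real.log (distOf p (fun ω => (B ω, C ω)) (B ω, C ω))
      = p ω * Real.log (distOf p (fun ω => (A ω, B ω, C ω)) (A ω, B ω, C ω))
        + p ω * Real.log (distOf p C (C ω)) := by
    intro ω
    rcases (hp ω).eq_or_lt with hω | hω
    · simp [← hω]
    rw [← mul_add, ← mul_add, ← Real.log_mul, ← Real.log_mul, hABC]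
    all_goals exact (hω.trans_le (self_le_distOf hp _ ω)).ne'
  unfold condMutInfo
  simp only [entRV_eq_neg_sum_log p]
  have := Finset.sum_congr rfl fun ω (_ : ω ∈ Finset.univ) => pointwise ω
  simp only [Finset.sum_add_distrib] at this
  linarith

end Entropy

lemma sum_mul_sum_comm_of_eq {ι : Type*} (s t : Finset ι) (w K : ι → ℝ)
    (hK : ∀ i ∈ s, ∀ j ∈ t, K i = K j) :
    (∑ i ∈ s, w i * K i) * ∑ j ∈ t, w j = (∑ j ∈ t, w j * K j) * ∑ i ∈ s, w i := by
  rw [Finset.sum_mul_sum, Finset.sum_mul_sum]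
  conv_rhs => rw [Finset.sum_comm]
  refine Finset.sum_congr rfl fun i hi => Finset.sum_congr rfl fun j hj => ?_
  rw [hK i hi j hj]
  ring

def jointLaw {S ℳ : Type*} (π : S → ℝ) (κ : S → ℳ → ℝ) : S × ℳ → ℝ :=
  fun ω => π ω.1 * κ ω.1 ω.2

section JointLaw

variable {S ℳ : Type*} [Fintype S] [Fintype ℳ] (π : S → ℝ) (κ : S → ℳ → ℝ)

lemma distOf_jointLaw_comp_fst {β : Type*} [DecidableEq β] (hκ : ∀ s, ∑ m, κ s m = 1)
    (V : S → β) (v : β) :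
    distOf (jointLaw π κ) (fun ω => V ω.1) v = ∑ s with V s = v, π s := by
  rw [Finset.sum_filter]
  unfold distOf jointLaw
  rw [Fintype.sum_prod_type]
  refine Finset.sum_congr rfl fun s _ => ?_
  split_ifs <;> simp [← Finset.mul_sum, hκ]

lemma distOf_jointLaw_snd_comp_fst [DecidableEq ℳ] {β : Type*} [DecidableEq β] (V : S → β)
    (m : ℳ) (v : β) :
    distOf (jointLaw π κ) (fun ω => (ω.2, V ω.1)) (m, v) = ∑ s with V s = v, π s * κ s m := by
  rw [Finset.sum_filter]
  unfold distOf jointLaw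
  rw [Fintype.sum_prod_type]
  refine Finset.sum_congr rfl fun s _ => ?_
  simp [Prod.ext_iff, ite_and, Finset.sum_ite_eq']

theorem isCondIndep_jointLaw [DecidableEq ℳ] {β γ : Type*} [DecidableEq β] [DecidableEq γ]
    (hκ : ∀ s, ∑ m, κ s m = 1) (B : S → β) (C : S → γ)
    (hBC : ∀ s₁ s₂, C s₁ = C s₂ → B s₁ ≠ B s₂ → κ s₁ = κ s₂) :
    IsCondIndep (jointLaw π κ) (fun ω => ω.2) (fun ω => B ω.1) (fun ω => C ω.1) := by
  intro m b c
  rw [distOf_jointLaw_snd_comp_fst π κ (fun s => (B s, C s)), distOf_jointLaw_comp_fst π κ hκ C,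
    distOf_jointLaw_snd_comp_fst π κ C, distOf_jointLaw_comp_fst π κ hκ (fun s => (B s, C s))]
  set fibre := ({s | C s = c} : Finset S)
  have hfibre : ({s | (B s, C s) = (b, c)} : Finset S) = {s ∈ fibre | B s = b} := by
    ext s
    simp [fibre, Prod.ext_iff, and_comm]
  rw [hfibre, ← Finset.sum_filter_add_sum_filter_not fibre (fun s => B s = b),
    ← Finset.sum_filter_add_sum_filter_not fibre (fun s => B s = b)]
  have hswap := sum_mul_sum_comm_of_eq {s ∈ fibre | B s = b} {s ∈ fibre | B s ≠ b} π
    (fun s => κ s m) fun i hi j hj => by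
      simp only [fibre, Finset.mem_filter, Finset.mem_univ, true_and] at hi hj
      exact congrFun (hBC i j (hi.1.trans hj.1.symm) (hi.2 ▸ Ne.symm hj.2)) m
  linear_combination hswap

theorem condMutInfo_jointLaw_eq_zero [DecidableEq ℳ] {β γ : Type*} [Fintype β] [DecidableEq β]
    [Fintype γ] [DecidableEq γ] (hπ : ∀ s, 0 ≤ π s) (hκ₀ : ∀ s m, 0 ≤ κ s m)
    (hκ : ∀ s, ∑ m, κ s m = 1) (B : S → β) (C : S → γ)
    (hBC : ∀ s₁ s₂, C s₁ = C s₂ → B s₁ ≠ B s₂ → κ s₁ = κ s₂) :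
    condMutInfo (jointLaw π κ) (fun ω => ω.2) (fun ω => B ω.1) (fun ω => C ω.1) = 0 :=
  condMutInfo_eq_zero_of_isCondIndep (p := jointLaw π κ)
    (fun ω => mul_nonneg (hπ ω.1) (hκ₀ ω.1 ω.2))
    (isCondIndep_jointLaw π κ hκ B C hBC)

end JointLaw

/-- **Claim 1, forward direction.** If the transition kernel `k(m|x,y)` is private against
Alice with respect to `g` and private against Bob with respect to `h`, then for every input
distribution `pXY` on `𝒳 × 𝒴`, under the joint law `pXY(x,y) · k(m|x,y)` of `(X, Y, M)`,
with `F = f(X,Y)`, `G = g(X,Y)`, `H = h(X,Y)`, we have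
`I(M; G | F, X) = 0` and `I(M; H | F, Y) = 0`. -/
theorem claim1_forward
    {𝒳 𝒴 𝒵 𝒢 ℋ ℳ : Type}
    [Fintype 𝒳] [DecidableEq 𝒳] [Fintype 𝒴] [DecidableEq 𝒴]
    [Fintype 𝒵] [DecidableEq 𝒵] [Fintype 𝒢] [DecidableEq 𝒢]
    [Fintype ℋ] [DecidableEq ℋ] [Fintype ℳ] [DecidableEq ℳ]
    (f : 𝒳 → 𝒴 → 𝒵) (g : 𝒳 → 𝒴 → 𝒢) (h : 𝒳 → 𝒴 → ℋ)
    (k : 𝒳 → 𝒴 → ℳ → ℝ)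
    (hker : ∀ x y, (∀ m, 0 ≤ k x y m) ∧ ∑ m, k x y m = 1)
    (hA : PrivAlice f g k) (hB : PrivBob f h k) :
    ∀ pXY : 𝒳 × 𝒴 → ℝ, IsPMF pXY →
      condMutInfo (fun ω : (𝒳 × 𝒴) × ℳ => pXY ω.1 * k ω.1.1 ω.1.2 ω.2)
          (fun ω => ω.2) (fun ω => g ω.1.1 ω.1.2)
          (fun ω => (f ω.1.1 ω.1.2, ω.1.1)) = 0 ∧
      condMutInfo (fun ω : (𝒳 × 𝒴) × ℳ => pXY ω.1 * k ω.1.1 ω.1.2 ω.2)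
          (fun ω => ω.2) (fun ω => h ω.1.1 ω.1.2)
          (fun ω => (f ω.1.1 ω.1.2, ω.1.2)) = 0 := by
  intro pXY hpXY
  have hκ₀ : ∀ (s : 𝒳 × 𝒴) m, 0 ≤ k s.1 s.2 m := fun s => (hker s.1 s.2).1
  have hκ : ∀ s : 𝒳 × 𝒴, ∑ m, k s.1 s.2 m = 1 := fun s => (hker s.1 s.2).2
  constructor
  · refine condMutInfo_jointLaw_eq_zero pXY (fun s => k s.1 s.2) hpXY.1 hκ₀ hκ
      (fun s => g s.1 s.2) (fun s => (f s.1 s.2, s.1)) ?_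
    rintro ⟨x, y₁⟩ ⟨x', y₂⟩ hC hg
    obtain ⟨hf, rfl⟩ := Prod.ext_iff.1 hC
    exact funext (hA x y₁ y₂ hg hf)
  · refine condMutInfo_jointLaw_eq_zero pXY (fun s => k s.1 s.2) hpXY.1 hκ₀ hκ
      (fun s => h s.1 s.2) (fun s => (f s.1 s.2, s.2)) ?_
    rintro ⟨x₁, y⟩ ⟨x₂, y'⟩ hC hh
    obtain ⟨hf, rfl⟩ := Prod.ext_iff.1 hC
    exact funext (hB x₁ x₂ y hh hf)
end

section
/- (Combinatorial lemma used in the 'if' part of Theorem 1.) If the 𝒳×𝒴 matrix R = (f(x,y)) contains no forbidden submatrix, then R is decomposable. -/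
open scoped BigOperators

/-- Transcript probability `p(m₁,…,m_t | x, y)` of an alternating interactive protocol with
`t` rounds and message alphabet `Fin mM`; Alice sends on even-indexed rounds (rounds
`0, 2, 4, …`, i.e. the 1st, 3rd, … messages) and Bob on odd-indexed rounds, each message
depending only on the sender's input and the past messages. -/
noncomputable def transProb {𝒳 𝒴 : Type*} {t mM : ℕ}
    (alice : ∀ i : Fin t, 𝒳 → (Fin i.val → Fin mM) → Fin mM → ℝ)
    (bob : ∀ i : Fin t, 𝒴 → (Fin i.val → Fin mM) → Fin mM → ℝ)
    (x : 𝒳) (y : 𝒴) (m : Fin t → Fin mM) : ℝ :=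
  ∏ i : Fin t,
    if i.val % 2 = 0 then alice i x (fun j => m (Fin.castLE i.isLt.le j)) (m i)
    else bob i y (fun j => m (Fin.castLE i.isLt.le j)) (m i)

/-- The relation `x₁ ∼ x₂` on `C` (relative to the submatrix `C × D`):
there is `y ∈ D` with `g x₁ y ≠ g x₂ y` and `f x₁ y = f x₂ y`. -/
def simX {𝒳 𝒴 𝒵 𝒢 : Type*} (f : 𝒳 → 𝒴 → 𝒵) (g : 𝒳 → 𝒴 → 𝒢)
    (C : Set 𝒳) (D : Set 𝒴) (x₁ x₂ : 𝒳) : Prop :=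
  x₁ ∈ C ∧ x₂ ∈ C ∧ ∃ y ∈ D, g x₁ y ≠ g x₂ y ∧ f x₁ y = f x₂ y

/-- The relation `y₁ ∼ y₂` on `D` (relative to the submatrix `C × D`):
there is `x ∈ C` with `h x y₁ ≠ h x y₂` and `f x y₁ = f x y₂`. -/
def simY {𝒳 𝒴 𝒵 ℋ : Type*} (f : 𝒳 → 𝒴 → 𝒵) (h : 𝒳 → 𝒴 → ℋ)
    (C : Set 𝒳) (D : Set 𝒴) (y₁ y₂ : 𝒴) : Prop :=
  y₁ ∈ D ∧ y₂ ∈ D ∧ ∃ x ∈ C, h x y₁ ≠ h x y₂ ∧ f x y₁ = f x y₂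

/-- The submatrix `C × D` of the matrix `R = (f(x,y))` is monochromatic: `f` is constant
on `C × D`. -/
def Monochromatic {𝒳 𝒴 𝒵 : Type*} (f : 𝒳 → 𝒴 → 𝒵) (C : Set 𝒳) (D : Set 𝒴) : Prop :=
  ∀ x₁ ∈ C, ∀ y₁ ∈ D, ∀ x₂ ∈ C, ∀ y₂ ∈ D, f x₁ y₁ = f x₂ y₂

/-- The submatrix `C × D` is forbidden: it is not monochromatic, all elements of `C` are
equivalent under the reflexive-transitive closure of `∼` on `C`, and all elements of `D`
are equivalent under the reflexive-transitive closure of `∼` on `D`. -/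
def Forbidden {𝒳 𝒴 𝒵 𝒢 ℋ : Type*} (f : 𝒳 → 𝒴 → 𝒵) (g : 𝒳 → 𝒴 → 𝒢) (h : 𝒳 → 𝒴 → ℋ)
    (C : Set 𝒳) (D : Set 𝒴) : Prop :=
  ¬ Monochromatic f C D ∧
  (∀ x₁ ∈ C, ∀ x₂ ∈ C, Relation.ReflTransGen (simX f g C D) x₁ x₂) ∧
  (∀ y₁ ∈ D, ∀ y₂ ∈ D, Relation.ReflTransGen (simY f h C D) y₁ y₂)

/-- A `C × D` matrix is decomposable: it is monochromatic, or it is rows decomposable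
into `t ≥ 2` nonempty parts `C₁,…,C_t` (a partition of `C` in which any `x₁ ∼ x₂` lie in
a common part) whose submatrices `Cᵢ × D` are all decomposable, or symmetrically it is
columns decomposable into decomposable submatrices `C × Dⱼ`. -/
inductive Decomposable {𝒳 𝒴 𝒵 𝒢 ℋ : Type*}
    (f : 𝒳 → 𝒴 → 𝒵) (g : 𝒳 → 𝒴 → 𝒢) (h : 𝒳 → 𝒴 → ℋ) : Set 𝒳 → Set 𝒴 → Prop
  | mono (C : Set 𝒳) (D : Set 𝒴) (hmono : Monochromatic f C D) : Decomposable f g h C D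
  | rows (C : Set 𝒳) (D : Set 𝒴) (t : ℕ) (ht : 2 ≤ t) (parts : Fin t → Set 𝒳)
      (hne : ∀ i, (parts i).Nonempty)
      (hdisj : ∀ i j, i ≠ j → Disjoint (parts i) (parts j))
      (hcover : (⋃ i, parts i) = C)
      (hsim : ∀ x₁ x₂, simX f g C D x₁ x₂ → ∀ i, x₁ ∈ parts i → x₂ ∈ parts i)
      (hrec : ∀ i, Decomposable f g h (parts i) D) : Decomposable f g h C D
  | cols (C : Set 𝒳) (D : Set 𝒴) (t : ℕ) (ht : 2 ≤ t) (parts : Fin t → Set 𝒴)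
      (hne : ∀ j, (parts j).Nonempty)
      (hdisj : ∀ i j, i ≠ j → Disjoint (parts i) (parts j))
      (hcover : (⋃ j, parts j) = D)
      (hsim : ∀ y₁ y₂, simY f h C D y₁ y₂ → ∀ j, y₁ ∈ parts j → y₂ ∈ parts j)
      (hrec : ∀ j, Decomposable f g h C (parts j)) : Decomposable f g h C D

/-! Induct on `|C| + |D|`. A submatrix that is neither monochromatic nor forbidden has two rows
(or two columns) that are not `≡`-equivalent. Splitting `C` into the `≡`-class of one of them and
its complement gives a rows decomposition, since `∼` never crosses the split, into two strictly
smaller submatrices. -/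

open Relation

section Decomposition

variable {𝒳 𝒴 𝒵 𝒢 ℋ : Type*} {f : 𝒳 → 𝒴 → 𝒵} {g : 𝒳 → 𝒴 → 𝒢} {h : 𝒳 → 𝒴 → ℋ}
  {C : Set 𝒳} {D : Set 𝒴}

instance : Std.Symm (simX f g C D) :=
  ⟨fun _ _ ⟨h₁, h₂, y, hy, hg, hf⟩ => ⟨h₂, h₁, y, hy, hg.symm, hf.symm⟩⟩

theorem Monochromatic.transpose (hm : Monochromatic f C D) : Monochromatic (flip f) D C :=
  fun y₁ hy₁ x₁ hx₁ y₂ hy₂ x₂ hx₂ => hm x₁ hx₁ y₁ hy₁ x₂ hx₂ y₂ hy₂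

/-- `simY f h C D` is `simX (flip f) (flip h) D C` by definition, so transposing exchanges rows
and columns decompositions. -/
theorem Decomposable.transpose (hd : Decomposable f g h C D) :
    Decomposable (flip f) (flip h) (flip g) D C := by
  induction hd with
  | mono C D hm => exact .mono D C hm.transpose
  | rows C D t ht parts hne hdisj hcover hsim _ ih =>
    exact .cols D C t ht parts hne hdisj hcover hsim ih
  | cols C D t ht parts hne hdisj hcover hsim _ ih =>
    exact .rows D C t ht parts hne hdisj hcover hsim ih

theorem Decomposable.of_rows_split (p : 𝒳 → Prop)
    (hp : ∀ x₁ x₂, simX f g C D x₁ x₂ → p x₁ → p x₂)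
    (hpos : ∃ x ∈ C, p x) (hneg : ∃ x ∈ C, ¬ p x)
    (hd : ∀ C' ⊂ C, Decomposable f g h C' D) : Decomposable f g h C D := by
  obtain ⟨x₀, hx₀, hpx₀⟩ := hpos
  obtain ⟨x₁, hx₁, hpx₁⟩ := hneg
  have hdisj : Disjoint {x ∈ C | p x} {x ∈ C | ¬ p x} :=
    Set.disjoint_left.2 fun _ ha hb => hb.2 ha.2
  have hsep : ∀ q : 𝒳 → Prop, (∃ x ∈ C, ¬ q x) → {x ∈ C | q x} ⊂ C := fun _ ⟨x, hx, hqx⟩ =>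
    (Set.ssubset_iff_of_subset (Set.sep_subset _ _)).2 ⟨x, hx, fun hx' => hqx hx'.2⟩
  refine .rows C D 2 le_rfl ![{x ∈ C | p x}, {x ∈ C | ¬ p x}] ?_ ?_ ?_ ?_ ?_
  · intro i
    fin_cases i
    exacts [⟨x₀, hx₀, hpx₀⟩, ⟨x₁, hx₁, hpx₁⟩]
  · intro i j hij
    fin_cases i <;> fin_cases j <;> simp_all [disjoint_comm]
  · ext x
    simp only [Set.mem_iUnion, Fin.exists_fin_two, Matrix.cons_val_zero, Matrix.cons_val_one,
      Set.mem_ofPred_eq]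
    tauto
  · intro a b hab i ha
    fin_cases i
    · exact ⟨hab.2.1, hp a b hab ha.2⟩
    · exact ⟨hab.2.1, fun hb => ha.2 (hp b a (symm hab) hb)⟩
  · intro i
    fin_cases i
    exacts [hd _ (hsep p ⟨x₁, hx₁, hpx₁⟩), hd _ (hsep _ ⟨x₀, hx₀, not_not.2 hpx₀⟩)]

theorem Decomposable.of_cols_split (p : 𝒴 → Prop)
    (hp : ∀ y₁ y₂, simY f h C D y₁ y₂ → p y₁ → p y₂)
    (hpos : ∃ y ∈ D, p y) (hneg : ∃ y ∈ D, ¬ p y)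
    (hd : ∀ D' ⊂ D, Decomposable f g h C D') : Decomposable f g h C D :=
  (Decomposable.of_rows_split (f := flip f) (g := flip h) (h := flip g) p hp hpos hneg
    fun D' hD' => (hd D' hD').transpose).transpose

theorem exists_rows_or_cols_split (hforb : ¬ Forbidden f g h C D)
    (hm : ¬ Monochromatic f C D) :
    (∃ x₀ ∈ C, ∃ x₁ ∈ C, ¬ ReflTransGen (simX f g C D) x₀ x₁) ∨
      ∃ y₀ ∈ D, ∃ y₁ ∈ D, ¬ ReflTransGen (simY f h C D) y₀ y₁ := by
  by_contra! hcon
  exact hforb ⟨hm, hcon.1, hcon.2⟩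

theorem decomposable_of_finite (hforb : ∀ C D, ¬ Forbidden f g h C D)
    (hC : C.Finite) (hD : D.Finite) : Decomposable f g h C D := by
  induction hn : C.ncard + D.ncard using Nat.strong_induction_on generalizing C D with
  | _ n ih =>
  by_cases hm : Monochromatic f C D
  · exact .mono C D hm
  obtain ⟨x₀, hx₀, x₁, hx₁, hx⟩ | ⟨y₀, hy₀, y₁, hy₁, hy⟩ :=
    exists_rows_or_cols_split (hforb C D) hm
  · refine .of_rows_split (ReflTransGen (simX f g C D) x₀) (fun _ _ h₁₂ h₀₁ => h₀₁.tail h₁₂)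
      ⟨x₀, hx₀, .refl⟩ ⟨x₁, hx₁, hx⟩ fun C' hC' => ih _ ?_ (hC.subset hC'.subset) hD rfl
    have := Set.ncard_lt_ncard hC' hC
    omega
  · refine .of_cols_split (ReflTransGen (simY f h C D) y₀) (fun _ _ h₁₂ h₀₁ => h₀₁.tail h₁₂)
      ⟨y₀, hy₀, .refl⟩ ⟨y₁, hy₁, hy⟩ fun D' hD' => ih _ ?_ hC (hD.subset hD'.subset) rfl
    have := Set.ncard_lt_ncard hD' hD
    omega

end Decomposition

theorem decomposable_of_no_forbidden_general {𝒳 𝒴 𝒵 𝒢 ℋ : Type}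
    [Fintype 𝒳] [Fintype 𝒴]
    (f : 𝒳 → 𝒴 → 𝒵) (g : 𝒳 → 𝒴 → 𝒢) (h : 𝒳 → 𝒴 → ℋ)
    (hforb : ∀ (C : Set 𝒳) (D : Set 𝒴), ¬ Forbidden f g h C D) :
    Decomposable f g h Set.univ Set.univ :=
  decomposable_of_finite hforb Set.finite_univ Set.finite_univ

/-- **Combinatorial lemma in the 'if' part of Theorem 1.** If the `𝒳 × 𝒴` matrix
`R = (f(x,y))` contains no forbidden submatrix, then `R` is decomposable. -/
theorem decomposable_of_no_forbidden {𝒳 𝒴 𝒵 𝒢 ℋ : Type}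
    [Fintype 𝒳] [DecidableEq 𝒳] [Fintype 𝒴] [DecidableEq 𝒴]
    [Fintype 𝒵] [DecidableEq 𝒵] [Fintype 𝒢] [DecidableEq 𝒢]
    [Fintype ℋ] [DecidableEq ℋ]
    (f : 𝒳 → 𝒴 → 𝒵) (g : 𝒳 → 𝒴 → 𝒢) (h : 𝒳 → 𝒴 → ℋ)
    (hforb : ∀ (C : Set 𝒳) (D : Set 𝒴), ¬ Forbidden f g h C D) :
    Decomposable f g h Set.univ Set.univ :=
  decomposable_of_no_forbidden_general f g h hforb
end

section
/- (Bob-side entropy bound from Example 2.) Let M₂ be a finite-valued random variable that is conditionally independent of Xⁿ given Yⁿ. Then H(Y_{X̄}ⁿ | M₂, Xⁿ) = H(Y_Xⁿ | M₂, Xⁿ), and consequently H(Yⁿ | M₂) ≤ 2·H(Y_Xⁿ | M₂, Xⁿ). -/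
open scoped BigOperators

/-- `Y_Xⁿ`: the vector whose `i`-th entry is `Y₀ᵢ` if `Xᵢ = 0` and `Y₁ᵢ` if `Xᵢ = 1`. -/
def selSame {Ω : Type*} {n : ℕ} (Xv : Ω → Fin n → Bool)
    (Yv : Ω → Fin n → Bool × Bool) : Ω → Fin n → Bool :=
  fun ω i => if Xv ω i then (Yv ω i).2 else (Yv ω i).1

/-- `Y_{X̄}ⁿ`: the vector whose `i`-th entry is `Y_{1−Xᵢ, i}`. -/
def selOpp {Ω : Type*} {n : ℕ} (Xv : Ω → Fin n → Bool)
    (Yv : Ω → Fin n → Bool × Bool) : Ω → Fin n → Bool :=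
  fun ω i => if Xv ω i then (Yv ω i).1 else (Yv ω i).2

/-- The inputs `(Xⁿ, Yⁿ) = (Xⁿ, (Y₀ⁿ, Y₁ⁿ))` are `n` i.i.d. copies of three mutually
independent uniform bits, i.e. the joint distribution is uniform on the `8^n` values. -/
def UnifIID {Ω : Type*} [Fintype Ω] {n : ℕ} (p : Ω → ℝ)
    (Xv : Ω → Fin n → Bool) (Yv : Ω → Fin n → Bool × Bool) : Prop :=
  ∀ (xv : Fin n → Bool) (yv : Fin n → Bool × Bool),
    probOf p (fun ω => Xv ω = xv ∧ Yv ω = yv) = (1 / 8 : ℝ) ^ n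

/-!
Conditional independence of `M₂` and `Xⁿ` given `Yⁿ` is the equality case of Gibbs' inequality
for `I(M₂; Xⁿ | Yⁿ)`: the law of `(M₂, Xⁿ, Yⁿ)` is `P(m, y) P(x, y) / P(y)`. As `(Xⁿ, Yⁿ)` is
uniform, this is `2⁻ⁿ P(m, y)`, so `Xⁿ` is uniform and independent of `(M₂, Yⁿ)`. Flipping every
bit of `Xⁿ` therefore preserves the law of `(M₂, Xⁿ, Yⁿ)` while exchanging `Y_Xⁿ` and `Y_{X̄}ⁿ`,
which gives the equality. For the bound, `H(Yⁿ | M₂) = H(Yⁿ | M₂, Xⁿ)` by independence; given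
`Xⁿ`, `Yⁿ` is in bijection with `(Y_Xⁿ, Y_{X̄}ⁿ)`, and subadditivity of conditional entropy
(Gibbs' inequality once more) bounds `H(Y_Xⁿ, Y_{X̄}ⁿ | M₂, Xⁿ)` by twice `H(Y_Xⁿ | M₂, Xⁿ)`.
-/

open Finset Real InformationTheory

section Law

variable {Ω α β : Type*} [Fintype Ω] [DecidableEq α] [DecidableEq β] {p : Ω → ℝ}

lemma distOf_nonneg (hp : ∀ ω, 0 ≤ p ω) (A : Ω → α) (a : α) : 0 ≤ distOf p A a :=
  sum_nonneg fun ω _ => by split_ifs <;> simp [hp ω]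

lemma le_distOf_apply (hp : ∀ ω, 0 ≤ p ω) (A : Ω → α) (ω : Ω) : p ω ≤ distOf p A (A ω) := by
  simpa [distOf] using single_le_sum (f := fun ω' => if A ω' = A ω then p ω' else 0)
    (fun ω' _ => by split_ifs <;> simp [hp ω']) (mem_univ ω)

lemma distOf_apply_pos (hp : ∀ ω, 0 ≤ p ω) (A : Ω → α) {ω : Ω} (hω : 0 < p ω) :
    0 < distOf p A (A ω) :=
  hω.trans_le (le_distOf_apply hp A ω)

lemma sum_distOf_mul [Fintype α] (A : Ω → α) (f : α → ℝ) :
    ∑ a, distOf p A a * f a = ∑ ω, p ω * f (A ω) := by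
  simp only [distOf, sum_mul, ite_mul, zero_mul]
  rw [sum_comm]
  simp

lemma sum_distOf [Fintype α] (A : Ω → α) : ∑ a, distOf p A a = ∑ ω, p ω := by
  simpa using sum_distOf_mul (p := p) A 1

lemma sum_distOf_pair_left [Fintype α] (A : Ω → α) (B : Ω → β) (b : β) :
    ∑ a, distOf p (fun ω => (A ω, B ω)) (a, b) = distOf p B b := by
  simp only [distOf, Prod.mk.injEq, ite_and]
  rw [sum_comm]
  simp

lemma sum_distOf_pair_right [Fintype β] (A : Ω → α) (B : Ω → β) (a : α) :
    ∑ b, distOf p (fun ω => (A ω, B ω)) (a, b) = distOf p A a := by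
  simp only [distOf, Prod.mk.injEq, ite_and]
  rw [sum_comm]
  refine sum_congr rfl fun ω _ => ?_
  split_ifs <;> simp

lemma distOf_le_distOf_comp (hp : ∀ ω, 0 ≤ p ω) (A : Ω → α) (f : α → β) (a : α) :
    distOf p A a ≤ distOf p (fun ω => f (A ω)) (f a) :=
  sum_le_sum fun ω _ => by split_ifs with h h' <;> simp_all

lemma distOf_comp_apply_of_injective {f : α → β} (hf : Function.Injective f) (A : Ω → α)
    (a : α) : distOf p (fun ω => f (A ω)) (f a) = distOf p A a := by
  simp [distOf, hf.eq_iff]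

lemma distOf_comp [Fintype α] (A : Ω → α) (f : α → β) :
    distOf p (fun ω => f (A ω)) = distOf (distOf p A) f := by
  ext b
  have h := sum_distOf_mul (p := p) A fun a => if f a = b then 1 else 0
  simp only [mul_ite, mul_one, mul_zero] at h
  rw [distOf, ← h]
  rfl

end Law

section Entropy

variable {Ω α β : Type*} [Fintype Ω] [Fintype α] [DecidableEq α] [Fintype β] [DecidableEq β]
  {p : Ω → ℝ}

lemma entRV_eq_neg_sum (A : Ω → α) : entRV p A = -∑ ω, p ω * log (distOf p A (A ω)) := by
  rw [entRV, entD, sum_distOf_mul A fun a => log (distOf p A a)]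

lemma entRV_comp (A : Ω → α) (f : α → β) :
    entRV p (fun ω => f (A ω)) = entRV (distOf p A) f := by
  rw [entRV, distOf_comp]; rfl

lemma entRV_comp_of_injective {f : α → β} (hf : Function.Injective f) (A : Ω → α) :
    entRV p (fun ω => f (A ω)) = entRV p A := by
  simp only [entRV_eq_neg_sum, distOf_comp_apply_of_injective hf]

end Entropy

section Independence

variable {Ω α β γ : Type*} [Fintype Ω] [Fintype α] [DecidableEq α] [Fintype β] [DecidableEq β]
  [DecidableEq γ] {p : Ω → ℝ}

def IndepRV (p : Ω → ℝ) (A : Ω → α) (B : Ω → β) : Prop :=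
  ∀ a b, distOf p (fun ω => (A ω, B ω)) (a, b) = distOf p A a * distOf p B b

lemma IndepRV.comp_left {A : Ω → α} {B : Ω → β} (h : IndepRV p A B) (f : α → γ) :
    IndepRV p (fun ω => f (A ω)) B := by
  intro c b
  have hfib : distOf p (fun ω => (f (A ω), B ω)) (c, b)
      = ∑ a, if f a = c then distOf p (fun ω => (A ω, B ω)) (a, b) else 0 := by
    refine (congrFun (distOf_comp (p := p) (fun ω => (A ω, B ω)) (Prod.map f id)) (c, b)).trans ?_
    simp [distOf, Fintype.sum_prod_type, Prod.map, Prod.mk.injEq, ite_and]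
  rw [hfib, distOf_comp A f, distOf, sum_mul]
  exact sum_congr rfl fun a _ => by rw [h, ite_mul, zero_mul]

lemma entRV_pair_of_indep (hp : ∀ ω, 0 ≤ p ω) {A : Ω → α} {B : Ω → β} (h : IndepRV p A B) :
    entRV p (fun ω => (A ω, B ω)) = entRV p A + entRV p B := by
  simp only [entRV_eq_neg_sum, ← neg_add, ← sum_add_distrib, ← mul_add]
  congr 1
  refine sum_congr rfl fun ω _ => ?_
  rcases (hp ω).eq_or_lt with h0 | h0
  · simp [← h0]
  · rw [h, log_mul (distOf_apply_pos hp A h0).ne' (distOf_apply_pos hp B h0).ne']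

lemma condEnt_pair_of_indep [Fintype γ] (hp : ∀ ω, 0 ≤ p ω) {A : Ω → α} {C : Ω → β} {X : Ω → γ}
    (h : IndepRV p (fun ω => (A ω, C ω)) X) :
    condEnt p A (fun ω => (C ω, X ω)) = condEnt p A C := by
  have hassoc : entRV p (fun ω => (A ω, C ω, X ω)) = entRV p (fun ω => ((A ω, C ω), X ω)) :=
    entRV_comp_of_injective (Equiv.prodAssoc α β γ).injective (fun ω => ((A ω, C ω), X ω))
  rw [condEnt, condEnt, hassoc, entRV_pair_of_indep hp h,
    entRV_pair_of_indep hp (h.comp_left Prod.snd)]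
  ring

end Independence

section Gibbs

lemma mul_klFun_div {x y : ℝ} (hx : 0 ≤ x) (hy : 0 < y) :
    y * klFun (x / y) = y - x - (x * log y - x * log x) := by
  rcases hx.eq_or_lt with rfl | hx
  · simp [klFun]
  · rw [klFun, log_div hx.ne' hy.ne']
    field_simp
    ring

lemma mul_log_sub_mul_log_le {x y : ℝ} (hx : 0 ≤ x) (hy : 0 ≤ y) (hxy : 0 < x → 0 < y) :
    x * log y - x * log x ≤ y - x := by
  rcases hy.eq_or_lt with rfl | hy
  · obtain rfl : x = 0 := by by_contra hx0; exact (hxy (hx.lt_of_ne' hx0)).false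
    simp
  · have := mul_klFun_div hx hy
    nlinarith [klFun_nonneg (div_nonneg hx hy.le)]

lemma eq_of_mul_log_sub_mul_log_eq {x y : ℝ} (hx : 0 ≤ x) (hy : 0 ≤ y) (hxy : 0 < x → 0 < y)
    (h : x * log y - x * log x = y - x) : x = y := by
  rcases hy.eq_or_lt with rfl | hy
  · by_contra hx0; exact (hxy (hx.lt_of_ne' hx0)).false
  · have hkl := mul_klFun_div hx hy
    rw [h, sub_self, mul_eq_zero] at hkl
    rcases hkl with hy0 | hkl
    · exact absurd hy0 hy.ne'
    · rw [klFun_eq_zero_iff (div_nonneg hx hy.le), div_eq_one_iff_eq hy.ne'] at hkl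
      exact hkl

lemma sum_mul_log_sub_le {τ : Type*} [Fintype τ] {f g : τ → ℝ} (hf : ∀ t, 0 ≤ f t)
    (hg : ∀ t, 0 ≤ g t) (hfg : ∀ t, 0 < f t → 0 < g t) :
    ∑ t, (f t * log (g t) - f t * log (f t)) ≤ ∑ t, g t - ∑ t, f t := by
  rw [← sum_sub_distrib]
  exact sum_le_sum fun t _ => mul_log_sub_mul_log_le (hf t) (hg t) (hfg t)

lemma eq_of_sum_mul_log_sub_eq {τ : Type*} [Fintype τ] {f g : τ → ℝ} (hf : ∀ t, 0 ≤ f t)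
    (hg : ∀ t, 0 ≤ g t) (hfg : ∀ t, 0 < f t → 0 < g t)
    (h : ∑ t, (f t * log (g t) - f t * log (f t)) = ∑ t, g t - ∑ t, f t) : f = g := by
  rw [← sum_sub_distrib] at h
  have := (sum_eq_sum_iff_of_le fun t _ => mul_log_sub_mul_log_le (hf t) (hg t) (hfg t)).1 h
  exact funext fun t => eq_of_mul_log_sub_mul_log_eq (hf t) (hg t) (hfg t) (this t (mem_univ t))

end Gibbs

section CondMutInfo

variable {Ω α β γ : Type*} [Fintype Ω] [DecidableEq α] [DecidableEq β] [DecidableEq γ]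
  {p : Ω → ℝ}

/-- `P(a, c) P(b, c) / P(c)`: the law with the same `(A, C)`- and `(B, C)`-marginals under which
`A` and `B` are conditionally independent given `C` (division by `P(c) = 0` returns `0`, which is
the right value there). -/
noncomputable def condIndepCoupling (p : Ω → ℝ) (A : Ω → α) (B : Ω → β) (C : Ω → γ) :
    α × β × γ → ℝ := fun t =>
  distOf p (fun ω => (A ω, C ω)) (t.1, t.2.2) * distOf p (fun ω => (B ω, C ω)) (t.2.1, t.2.2) /
    distOf p C t.2.2

variable (A : Ω → α) (B : Ω → β) (C : Ω → γ)

lemma condIndepCoupling_nonneg (hp : ∀ ω, 0 ≤ p ω) (t : α × β × γ) :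
    0 ≤ condIndepCoupling p A B C t :=
  div_nonneg (mul_nonneg (distOf_nonneg hp _ _) (distOf_nonneg hp _ _)) (distOf_nonneg hp _ _)

lemma condIndepCoupling_pos (hp : ∀ ω, 0 ≤ p ω) {t : α × β × γ}
    (ht : 0 < distOf p (fun ω => (A ω, B ω, C ω)) t) : 0 < condIndepCoupling p A B C t := by
  obtain ⟨a, b, c⟩ := t
  have hAC := ht.trans_le (distOf_le_distOf_comp hp (fun ω => (A ω, B ω, C ω))
    (fun t => (t.1, t.2.2)) (a, b, c))
  have hBC := ht.trans_le (distOf_le_distOf_comp hp (fun ω => (A ω, B ω, C ω))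
    (fun t => (t.2.1, t.2.2)) (a, b, c))
  have hC := ht.trans_le (distOf_le_distOf_comp hp (fun ω => (A ω, B ω, C ω))
    (fun t => t.2.2) (a, b, c))
  exact div_pos (mul_pos hAC hBC) hC

variable [Fintype α] [Fintype β] [Fintype γ]

lemma sum_condIndepCoupling : ∑ t, condIndepCoupling p A B C t = ∑ ω, p ω := by
  calc ∑ t, condIndepCoupling p A B C t
      = ∑ c, (∑ a, distOf p (fun ω => (A ω, C ω)) (a, c)) *
          (∑ b, distOf p (fun ω => (B ω, C ω)) (b, c)) / distOf p C c := by
        simp only [condIndepCoupling, Fintype.sum_prod_type, sum_mul_sum, sum_div]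
        exact (sum_congr rfl fun a _ => sum_comm).trans sum_comm
    _ = ∑ c, distOf p C c := by
        simp only [sum_distOf_pair_left, mul_self_div_self]
    _ = ∑ ω, p ω := sum_distOf C

lemma sum_mul_log_condIndepCoupling (hp : ∀ ω, 0 ≤ p ω) :
    ∑ t, (distOf p (fun ω => (A ω, B ω, C ω)) t * log (condIndepCoupling p A B C t) -
      distOf p (fun ω => (A ω, B ω, C ω)) t * log (distOf p (fun ω => (A ω, B ω, C ω)) t)) =
    -condMutInfo p A B C := by
  set T := fun ω => (A ω, B ω, C ω)
  have hsplit : ∀ ω, p ω * (log (condIndepCoupling p A B C (T ω)) - log (distOf p T (T ω))) =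
      p ω * log (distOf p (fun ω => (A ω, C ω)) (A ω, C ω)) +
        p ω * log (distOf p (fun ω => (B ω, C ω)) (B ω, C ω)) -
        p ω * log (distOf p C (C ω)) - p ω * log (distOf p T (T ω)) := by
    intro ω
    rcases (hp ω).eq_or_lt with h0 | h0
    · simp [← h0]
    · rw [condIndepCoupling, log_div (mul_pos (distOf_apply_pos hp _ h0)
        (distOf_apply_pos hp _ h0)).ne' (distOf_apply_pos hp _ h0).ne',
        log_mul (distOf_apply_pos hp _ h0).ne' (distOf_apply_pos hp _ h0).ne']
      ring
  calc _ = ∑ ω, p ω * (log (condIndepCoupling p A B C (T ω)) - log (distOf p T (T ω))) := by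
        simp only [← mul_sub]
        exact sum_distOf_mul T fun t => log (condIndepCoupling p A B C t) - log (distOf p T t)
    _ = _ := by
        simp only [hsplit, condMutInfo, entRV_eq_neg_sum, sum_add_distrib, sum_sub_distrib]
        ring

lemma condMutInfo_nonneg (hp : ∀ ω, 0 ≤ p ω) : 0 ≤ condMutInfo p A B C := by
  have := sum_mul_log_sub_le (distOf_nonneg hp _) (condIndepCoupling_nonneg A B C hp)
    (fun t => condIndepCoupling_pos A B C hp)
  rw [sum_mul_log_condIndepCoupling A B C hp, sum_condIndepCoupling, sum_distOf] at this
  linarith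

lemma distOf_mul_distOf_eq_of_condMutInfo_eq_zero (hp : ∀ ω, 0 ≤ p ω)
    (h : condMutInfo p A B C = 0) (a : α) (b : β) (c : γ) :
    distOf p (fun ω => (A ω, B ω, C ω)) (a, b, c) * distOf p C c =
      distOf p (fun ω => (A ω, C ω)) (a, c) * distOf p (fun ω => (B ω, C ω)) (b, c) := by
  have hJ := eq_of_sum_mul_log_sub_eq (distOf_nonneg hp _) (condIndepCoupling_nonneg A B C hp)
    (fun t => condIndepCoupling_pos A B C hp)
    (by rw [sum_mul_log_condIndepCoupling A B C hp, sum_condIndepCoupling, sum_distOf, h]; simp)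
  rw [congrFun hJ (a, b, c), condIndepCoupling]
  rcases (distOf_nonneg hp C c).eq_or_lt with hC | hC
  · have hAC : distOf p (fun ω => (A ω, C ω)) (a, c) = 0 := le_antisymm
      (hC ▸ distOf_le_distOf_comp hp (fun ω => (A ω, C ω)) Prod.snd (a, c)) (distOf_nonneg hp _ _)
    simp [← hC, hAC]
  · exact div_mul_cancel₀ _ hC.ne'

lemma condEnt_pair_le (hp : ∀ ω, 0 ≤ p ω) :
    condEnt p (fun ω => (A ω, B ω)) C ≤ condEnt p A C + condEnt p B C := by
  have hassoc : entRV p (fun ω => ((A ω, B ω), C ω)) = entRV p (fun ω => (A ω, B ω, C ω)) :=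
    (entRV_comp_of_injective (Equiv.prodAssoc α β γ).injective (fun ω => ((A ω, B ω), C ω))).symm
  have := condMutInfo_nonneg A B C hp
  rw [condMutInfo] at this
  rw [condEnt, condEnt, condEnt, hassoc]
  linarith

end CondMutInfo

namespace UnifIID

variable {Ω 𝓜 : Type*} [Fintype Ω] [Fintype 𝓜] [DecidableEq 𝓜] {n : ℕ} {p : Ω → ℝ}
  {X : Ω → Fin n → Bool} {Y : Ω → Fin n → Bool × Bool}

lemma distOf_pair (h : UnifIID p X Y) (x : Fin n → Bool) (y : Fin n → Bool × Bool) :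
    distOf p (fun ω => (X ω, Y ω)) (x, y) = (1 / 8) ^ n := by
  rw [← h x y, distOf, probOf]
  simp only [Prod.mk.injEq]
  congr!

lemma distOf_right (h : UnifIID p X Y) (y : Fin n → Bool × Bool) :
    distOf p Y y = (1 / 4) ^ n := by
  rw [← sum_distOf_pair_left X Y y]
  simp only [h.distOf_pair, sum_const, card_univ, Fintype.card_fun, Fintype.card_bool,
    Fintype.card_fin, nsmul_eq_mul]
  push_cast
  rw [← mul_pow]
  norm_num

lemma distOf_left (h : UnifIID p X Y) (x : Fin n → Bool) :
    distOf p X x = (1 / 2) ^ n := by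
  rw [← sum_distOf_pair_right X Y x]
  simp only [h.distOf_pair, sum_const, card_univ, Fintype.card_fun, Fintype.card_fin,
    nsmul_eq_mul]
  push_cast
  rw [← mul_pow]
  norm_num

lemma distOf_triple_of_condMutInfo_eq_zero (h : UnifIID p X Y) (hp : ∀ ω, 0 ≤ p ω)
    {M : Ω → 𝓜} (hci : condMutInfo p M X Y = 0) (m : 𝓜) (x : Fin n → Bool)
    (y : Fin n → Bool × Bool) :
    distOf p (fun ω => (M ω, X ω, Y ω)) (m, x, y) =
      (1 / 2) ^ n * distOf p (fun ω => (M ω, Y ω)) (m, y) := by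
  have := distOf_mul_distOf_eq_of_condMutInfo_eq_zero M X Y hp hci m x y
  rw [h.distOf_right, h.distOf_pair] at this
  have h8 : (1 / 8 : ℝ) ^ n = (1 / 2) ^ n * (1 / 4) ^ n := by rw [← mul_pow]; norm_num
  rw [h8, ← mul_assoc] at this
  exact mul_right_cancel₀ (by positivity) (this.trans (by ring))

lemma indepRV_of_condMutInfo_eq_zero (h : UnifIID p X Y) (hp : ∀ ω, 0 ≤ p ω) {M : Ω → 𝓜}
    (hci : condMutInfo p M X Y = 0) : IndepRV p (fun ω => (Y ω, M ω)) X := by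
  rintro ⟨y, m⟩ x
  have hperm : Function.Injective fun t : 𝓜 × (Fin n → Bool) × (Fin n → Bool × Bool) =>
      ((t.2.2, t.1), t.2.1) := by
    rintro ⟨m, x, y⟩ ⟨m', x', y'⟩ h
    simp_all
  have hswap : distOf p (fun ω => (Y ω, M ω)) (y, m) = distOf p (fun ω => (M ω, Y ω)) (m, y) :=
    distOf_comp_apply_of_injective Prod.swap_injective (fun ω => (M ω, Y ω)) (m, y)
  rw [distOf_comp_apply_of_injective hperm (fun ω => (M ω, X ω, Y ω)) (m, x, y), hswap,
    h.distOf_triple_of_condMutInfo_eq_zero hp hci, h.distOf_left, mul_comm]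

lemma distOf_not_eq_of_condMutInfo_eq_zero (h : UnifIID p X Y) (hp : ∀ ω, 0 ≤ p ω)
    {M : Ω → 𝓜} (hci : condMutInfo p M X Y = 0) :
    distOf p (fun ω => (M ω, (fun i => !X ω i), Y ω)) = distOf p (fun ω => (M ω, X ω, Y ω)) := by
  ext ⟨m, x, y⟩
  have hnot : Function.Involutive fun t : 𝓜 × (Fin n → Bool) × (Fin n → Bool × Bool) =>
      (t.1, (fun i => !t.2.1 i), t.2.2) := fun t => by simp
  calc _ = distOf p (fun ω => (M ω, X ω, Y ω)) (m, (fun i => !x i), y) := by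
        simpa using distOf_comp_apply_of_injective hnot.injective (fun ω => (M ω, X ω, Y ω))
          (m, (fun i => !x i), y)
    _ = _ := by rw [h.distOf_triple_of_condMutInfo_eq_zero hp hci,
        h.distOf_triple_of_condMutInfo_eq_zero hp hci]

end UnifIID

section Selection

variable {Ω 𝓜 : Type*} {n : ℕ} {X : Ω → Fin n → Bool} {Y : Ω → Fin n → Bool × Bool}

lemma selOpp_eq_selSame_not : selOpp X Y = selSame (fun ω i => !X ω i) Y := by
  funext ω i
  unfold selOpp selSame
  cases h : X ω i <;> simp [h]

variable [Fintype Ω] [Fintype 𝓜] [DecidableEq 𝓜] {p : Ω → ℝ} {M : Ω → 𝓜}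

lemma condEnt_selSame_selOpp :
    condEnt p (fun ω => (selSame X Y ω, selOpp X Y ω)) (fun ω => (M ω, X ω)) =
      condEnt p Y (fun ω => (M ω, X ω)) := by
  have hsplit : Function.Injective fun s : (Fin n → Bool × Bool) × 𝓜 × (Fin n → Bool) =>
      (((fun i => if s.2.2 i then (s.1 i).2 else (s.1 i).1),
        (fun i => if s.2.2 i then (s.1 i).1 else (s.1 i).2)), s.2) := by
    rintro ⟨y, m, x⟩ ⟨y', m', x'⟩ h
    simp only [Prod.mk.injEq] at h
    obtain ⟨⟨h₁, h₂⟩, rfl, rfl⟩ := h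
    refine Prod.ext (funext fun i => ?_) rfl
    have h₁ := congrFun h₁ i
    have h₂ := congrFun h₂ i
    cases hx : x i <;> simp_all [Prod.ext_iff]
  rw [condEnt, condEnt]
  congr 1
  exact entRV_comp_of_injective hsplit (fun ω => (Y ω, M ω, X ω))

lemma entRV_selOpp_eq_entRV_selSame
    (hnot : distOf p (fun ω => (M ω, (fun i => !X ω i), Y ω)) =
      distOf p (fun ω => (M ω, X ω, Y ω))) :
    entRV p (fun ω => (selOpp X Y ω, M ω, X ω)) = entRV p (fun ω => (selSame X Y ω, M ω, X ω)) := by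
  set G := fun t : 𝓜 × (Fin n → Bool) × (Fin n → Bool × Bool) =>
    ((fun i => if t.2.1 i then (t.2.2 i).2 else (t.2.2 i).1), t.1, t.2.1)
  set θ := fun s : (Fin n → Bool) × 𝓜 × (Fin n → Bool) => (s.1, s.2.1, fun i => !s.2.2 i)
  have hθ : Function.Involutive θ := fun s => by simp [θ]
  calc _ = entRV p (fun ω => θ (G (M ω, (fun i => !X ω i), Y ω))) := by
        simp only [selOpp_eq_selSame_not, G, θ, Bool.not_not]
        rfl
    _ = entRV p (fun ω => G (M ω, (fun i => !X ω i), Y ω)) := entRV_comp_of_injective hθ.injective _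
    _ = entRV p (fun ω => G (M ω, X ω, Y ω)) := by rw [entRV_comp, entRV_comp, hnot]
    _ = _ := rfl

end Selection

/-- **Bob-side entropy bound from Example 2.** If `M₂` is conditionally independent of
`Xⁿ` given `Yⁿ`, then `H(Y_{X̄}ⁿ | M₂, Xⁿ) = H(Y_Xⁿ | M₂, Xⁿ)` and consequently
`H(Yⁿ | M₂) ≤ 2 · H(Y_Xⁿ | M₂, Xⁿ)`. -/
theorem bob_side_entropy_bound {Ω 𝓜₂ : Type}
    [Fintype Ω] [Fintype 𝓜₂] [DecidableEq 𝓜₂]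
    (n : ℕ) (p : Ω → ℝ) (hp : IsPMF p)
    (Xv : Ω → Fin n → Bool) (Yv : Ω → Fin n → Bool × Bool)
    (hiid : UnifIID p Xv Yv)
    (M₂ : Ω → 𝓜₂)
    (hci : condMutInfo p M₂ Xv Yv = 0) :
    condEnt p (selOpp Xv Yv) (fun ω => (M₂ ω, Xv ω)) =
      condEnt p (selSame Xv Yv) (fun ω => (M₂ ω, Xv ω)) ∧
    condEnt p Yv M₂ ≤ 2 * condEnt p (selSame Xv Yv) (fun ω => (M₂ ω, Xv ω)) := by
  have hsymm : condEnt p (selOpp Xv Yv) (fun ω => (M₂ ω, Xv ω)) =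
      condEnt p (selSame Xv Yv) (fun ω => (M₂ ω, Xv ω)) := by
    rw [condEnt, condEnt,
      entRV_selOpp_eq_entRV_selSame (hiid.distOf_not_eq_of_condMutInfo_eq_zero hp.1 hci)]
  refine ⟨hsymm, ?_⟩
  calc condEnt p Yv M₂ = condEnt p Yv (fun ω => (M₂ ω, Xv ω)) :=
        (condEnt_pair_of_indep hp.1 (hiid.indepRV_of_condMutInfo_eq_zero hp.1 hci)).symm
    _ = condEnt p (fun ω => (selSame Xv Yv ω, selOpp Xv Yv ω)) (fun ω => (M₂ ω, Xv ω)) :=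
        condEnt_selSame_selOpp.symm
    _ ≤ condEnt p (selSame Xv Yv) (fun ω => (M₂ ω, Xv ω)) +
          condEnt p (selOpp Xv Yv) (fun ω => (M₂ ω, Xv ω)) := condEnt_pair_le _ _ _ hp.1
    _ = 2 * condEnt p (selSame Xv Yv) (fun ω => (M₂ ω, Xv ω)) := by rw [hsymm]; ring
end
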